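/- arXiv:2502.20863 — 3 statements merged into one kernel-verified Lean document; each statement's English description precedes it below -/
import Mathlib

section
/- Let m ≥ 10^9 be an integer and set s = ⌊2^{10^{-8}·m}⌋. There exists a partition E(K_s) = E_R ∪ E_B of the edge set of the complete graph on vertex set [s] such that for every function w : [s] → [0,1] with Σ_{i=1}^s w(i) = x ≥ m and for each c ∈ {R, B}, it holds that Σ_{ij ∈ E_c} w(i)·w(j) < 0.51·x(x−1)/2. -/
/-!
Colour the pairs `i < j` of `[s]` by `ω`, uniformly at random, and let
`discrepancy ω v = Σ_{i<j} ±v_i v_j` be the signed weight of a vector `v`, the sign recording the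
colour of `ij`. For a fixed `k`-set `S`, Hoeffding's inequality bounds the probability that
`|discrepancy ω 1_S| > k(k + m)/1000` by `2e^{-(k+m)^2/10^6} ≤ 2e^{-m^2/10^6} e^{-2km/10^6}`.
Summed over all `S` this is `2e^{-m^2/10^6} (1 + e^{-2m/10^6})^s ≤ 2e^{1-m^2/10^6} < 1`, because
`s ≤ e^{m/10^8}`; so some colouring is balanced: good for every `S` at once.

A weight vector `w ∈ [0,1]^s` is the mean of the indicator vectors of the random set containing each
`i` independently with probability `w_i`. As `discrepancy ω` only involves products `v_i v_j` with
`i ≠ j`, it is affine in each coordinate, so `discrepancy ω w` is the mean of `discrepancy ω 1_S`,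
hence `|discrepancy ω w| ≤ E[|S|(|S| + m)]/1000 ≤ (x^2 + x + m x)/1000`. A colour class has weight
`(Σ_{i<j} w_i w_j ± discrepancy ω w)/2 ≤ x^2/4 + 3x^2/2000`, which is less than `0.51·x(x-1)/2`.
-/

open Finset

noncomputable def sBound (m : ℕ) : ℕ := ⌊(2 : ℝ) ^ ((m : ℝ) / 10 ^ 8)⌋₊

open Real

namespace GrahamRodlRucinski

def spin (b : Bool) : ℝ := if b then 1 else -1

def ind (b : Bool) : ℝ := if b then 1 else 0

lemma ind_nonneg (b : Bool) : 0 ≤ ind b := by cases b <;> simp [ind]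

lemma ind_sq (b : Bool) : ind b ^ 2 = ind b := by cases b <;> simp [ind]

section BooleanCube

variable {κ : Type*} [Fintype κ]

def size (g : κ → Bool) : ℝ := ∑ i, ind (g i)

variable [DecidableEq κ]

lemma sum_exp_sum_mul_sign (a : κ → ℝ) :
    ∑ ω : κ → Bool, exp (∑ i, a i * spin (ω i)) = ∏ i, 2 * cosh (a i) := by
  simp_rw [exp_sum]
  rw [← Fintype.prod_sum fun i b => exp (a i * spin b)]
  refine prod_congr rfl fun i _ => ?_
  simp only [Fintype.sum_bool, spin, if_true, Bool.false_eq_true, if_false, mul_one,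
    mul_neg_one, cosh_eq]
  ring

lemma sum_exp_sum_mul_sign_le (a : κ → ℝ) :
    ∑ ω : κ → Bool, exp (∑ i, a i * spin (ω i))
      ≤ 2 ^ Fintype.card κ * exp ((∑ i, a i ^ 2) / 2) := by
  rw [sum_exp_sum_mul_sign, sum_div, exp_sum, ← Finset.card_univ, ← prod_const, ← prod_mul_distrib]
  gcongr with i
  exact cosh_le_exp_half_sq _

lemma card_le_sum_mul_sign (c : κ → ℝ) {t V : ℝ} (ht : 0 ≤ t) (hV : 0 < V)
    (hcV : ∑ i, c i ^ 2 ≤ V) :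
    (#{ω : κ → Bool | t ≤ ∑ i, c i * spin (ω i)} : ℝ)
      ≤ 2 ^ Fintype.card κ * exp (-t ^ 2 / (2 * V)) := by
  set l := t / V
  have hl : 0 ≤ l := by positivity
  have markov : (#{ω : κ → Bool | t ≤ ∑ i, c i * spin (ω i)} : ℝ) * exp (l * t)
      ≤ 2 ^ Fintype.card κ * exp (l ^ 2 * V / 2) :=
    calc _ ≤ ∑ ω ∈ {ω : κ → Bool | t ≤ ∑ i, c i * spin (ω i)},
          exp (∑ i, (l * c i) * spin (ω i)) := by
          rw [← nsmul_eq_mul]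
          refine card_nsmul_le_sum _ _ _ fun ω hω => exp_le_exp.mpr ?_
          simp_rw [mul_assoc, ← mul_sum]
          exact mul_le_mul_of_nonneg_left (mem_filter.mp hω).2 hl
      _ ≤ ∑ ω : κ → Bool, exp (∑ i, (l * c i) * spin (ω i)) :=
          sum_le_sum_of_subset_of_nonneg (filter_subset _ _) fun _ _ _ => (exp_pos _).le
      _ ≤ 2 ^ Fintype.card κ * exp ((∑ i, (l * c i) ^ 2) / 2) := sum_exp_sum_mul_sign_le _
      _ ≤ 2 ^ Fintype.card κ * exp (l ^ 2 * V / 2) := by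
          simp_rw [mul_pow, ← mul_sum]
          gcongr
  have hexp : l ^ 2 * V / 2 - l * t = -t ^ 2 / (2 * V) := by
    simp only [l]
    field_simp
    ring
  rw [← hexp, exp_sub, mul_div_assoc', le_div_iff₀ (exp_pos _)]
  exact markov

lemma card_le_abs_sum_mul_sign (c : κ → ℝ) {t V : ℝ} (ht : 0 ≤ t) (hV : 0 < V)
    (hcV : ∑ i, c i ^ 2 ≤ V) :
    (#{ω : κ → Bool | t ≤ |∑ i, c i * spin (ω i)|} : ℝ)
      ≤ 2 * 2 ^ Fintype.card κ * exp (-t ^ 2 / (2 * V)) := by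
  have hneg : ∑ i, (-c i) ^ 2 ≤ V := by simpa only [neg_sq] using hcV
  have hsum : ∀ ω : κ → Bool, -∑ i, c i * spin (ω i) = ∑ i, -c i * spin (ω i) := by
    simp [sum_neg_distrib]
  simp_rw [le_abs, hsum, filter_or]
  calc _ ≤ (#{ω : κ → Bool | t ≤ ∑ i, c i * spin (ω i)} : ℝ)
          + #{ω : κ → Bool | t ≤ ∑ i, -c i * spin (ω i)} := by
        exact_mod_cast card_union_le _ _
    _ ≤ _ := by
        linarith [card_le_sum_mul_sign c ht hV hcV, card_le_sum_mul_sign _ ht hV hneg]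

lemma sum_prod_exp_neg_mul_ind_le (r : ℝ) :
    ∑ g : κ → Bool, ∏ i, exp (-r * ind (g i)) ≤ exp (Fintype.card κ * exp (-r)) := by
  rw [← Fintype.prod_sum fun i b => exp (-r * ind b), ← nsmul_eq_mul, ← card_univ,
    ← sum_const, exp_sum]
  gcongr with i
  simpa [Fintype.sum_bool, ind, add_comm] using add_one_le_exp (exp (-r))

end BooleanCube

section Discrepancy

variable {ι : Type*} [Fintype ι] [LinearOrder ι]

lemma two_mul_sum_lt_le_sq (u : ι → ℝ) (hu : ∀ i, 0 ≤ u i) :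
    2 * ∑ i, ∑ j, (if i < j then u i * u j else 0) ≤ (∑ i, u i) ^ 2 := by
  have hswap : ∑ i, ∑ j, (if i < j then u i * u j else 0)
      = ∑ i, ∑ j, (if j < i then u i * u j else 0) := by
    rw [sum_comm]
    exact sum_congr rfl fun i _ => sum_congr rfl fun j _ => by rw [mul_comm]
  calc _ = ∑ i, ∑ j, ((if i < j then u i * u j else 0) + if j < i then u i * u j else 0) := by
        rw [two_mul]
        nth_rw 2 [hswap]
        simp_rw [← sum_add_distrib]
    _ ≤ ∑ i, ∑ j, u i * u j := by
        gcongr with i _ j _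
        have := mul_nonneg (hu i) (hu j)
        split_ifs with h h' <;> first | exact absurd (h.trans h') (lt_irrefl _) | linarith
    _ = (∑ i, u i) ^ 2 := by rw [sq, sum_mul_sum]

def discrepancy (ω : ι × ι → Bool) (v : ι → ℝ) : ℝ :=
  ∑ i, ∑ j, if i < j then spin (ω (i, j)) * (v i * v j) else 0

lemma card_lt_abs_discrepancy_le (v : ι → ℝ) {t : ℝ} (ht : 0 ≤ t) (hv : 0 < ∑ i, v i ^ 2) :
    (#{ω : ι × ι → Bool | t < |discrepancy ω v|} : ℝ)
      ≤ 2 * 2 ^ Fintype.card (ι × ι) * exp (-t ^ 2 / (∑ i, v i ^ 2) ^ 2) := by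
  set c : ι × ι → ℝ := fun p => if p.1 < p.2 then v p.1 * v p.2 else 0
  have hdisc : ∀ ω, discrepancy ω v = ∑ p, c p * spin (ω p) := by
    intro ω
    rw [discrepancy, ← Fintype.sum_prod_type']
    refine sum_congr rfl fun p _ => ?_
    simp only [c]
    split_ifs <;> ring
  have hc : ∑ p, c p ^ 2 ≤ (∑ i, v i ^ 2) ^ 2 / 2 := by
    have := two_mul_sum_lt_le_sq (fun i => v i ^ 2) fun i => sq_nonneg _
    rw [← Fintype.sum_prod_type' (fun i j => if i < j then v i ^ 2 * v j ^ 2 else 0)] at this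
    have hsq : ∑ p, c p ^ 2 = ∑ p : ι × ι, if p.1 < p.2 then v p.1 ^ 2 * v p.2 ^ 2 else 0 :=
      sum_congr rfl fun p _ => by simp only [c]; split_ifs <;> ring
    rw [hsq]
    linarith
  calc (#{ω : ι × ι → Bool | t < |discrepancy ω v|} : ℝ)
      ≤ #{ω : ι × ι → Bool | t ≤ |∑ p, c p * spin (ω p)|} := by
        refine Nat.cast_le.mpr (card_le_card fun ω hω => ?_)
        simp only [mem_filter, mem_univ, true_and, ← hdisc] at hω ⊢
        exact hω.le
    _ ≤ _ := by
        convert card_le_abs_sum_mul_sign c ht (by positivity) hc using 4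
        ring

end Discrepancy

section GoodColouring

variable {ι : Type*} [Fintype ι] [LinearOrder ι]

noncomputable def threshold (m k : ℝ) : ℝ := k * (k + m) / 1000

def Balanced (m : ℝ) (ω : ι × ι → Bool) : Prop :=
  ∀ g : ι → Bool, |discrepancy ω fun i => ind (g i)| ≤ threshold m (size g)

lemma card_lt_abs_discrepancy_ind_le {m : ℝ} (hm : 0 ≤ m) (g : ι → Bool) :
    (#{ω : ι × ι → Bool | threshold m (size g) < |discrepancy ω fun i => ind (g i)|} : ℝ)
      ≤ 2 * 2 ^ Fintype.card (ι × ι) * exp (-m ^ 2 / 10 ^ 6)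
          * ∏ i, exp (-(2 * m / 10 ^ 6) * ind (g i)) := by
  rcases (sum_nonneg fun i _ => ind_nonneg (g i)).eq_or_lt with hk | hk
  · have hzero : ∀ i, ind (g i) = 0 :=
      fun i => (sum_eq_zero_iff_of_nonneg fun i _ => ind_nonneg (g i)).mp hk.symm i (mem_univ i)
    have hempty : ({ω : ι × ι → Bool | threshold m (size g) < |discrepancy ω fun i => ind (g i)|}
        : Finset _) = ∅ := by
      simp [discrepancy, hzero, size, threshold]
    rw [hempty, card_empty, Nat.cast_zero]
    positivity
  · have hsq : ∑ i, ind (g i) ^ 2 = size g := by simp only [ind_sq, size]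
    have hk' : 0 < size g := hk
    have hexponent : -threshold m (size g) ^ 2 / size g ^ 2
        ≤ -m ^ 2 / 10 ^ 6 + -(2 * m / 10 ^ 6) * size g := by
      have hquot : threshold m (size g) ^ 2 / size g ^ 2 = (size g + m) ^ 2 / 10 ^ 6 := by
        rw [threshold]
        field_simp
        ring
      rw [neg_div, hquot]
      nlinarith [sq_nonneg (size g)]
    calc _ ≤ 2 * 2 ^ Fintype.card (ι × ι) * exp (-threshold m (size g) ^ 2 / size g ^ 2) := by
          rw [← hsq]
          exact card_lt_abs_discrepancy_le _ (by unfold threshold; positivity) (hsq ▸ hk')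
      _ ≤ 2 * 2 ^ Fintype.card (ι × ι) * exp (-m ^ 2 / 10 ^ 6 + -(2 * m / 10 ^ 6) * size g) := by
          gcongr
      _ = _ := by rw [exp_add, size, mul_sum, exp_sum]; ring

lemma exists_balanced {m : ℝ} (hm : 10 ^ 4 ≤ m)
    (hcard : (Fintype.card ι : ℝ) ≤ exp (m / 10 ^ 8)) :
    ∃ ω : ι × ι → Bool, Balanced m ω := by
  by_contra! hbad
  simp only [Balanced, not_forall, not_le] at hbad
  set K := Fintype.card (ι × ι)
  have hcover : (univ : Finset (ι × ι → Bool)) ⊆ univ.biUnion fun g =>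
      {ω : ι × ι → Bool | threshold m (size g) < |discrepancy ω fun i => ind (g i)|} := by
    intro ω _
    obtain ⟨g, hg⟩ := hbad ω
    exact mem_biUnion.mpr ⟨g, mem_univ g, mem_filter.mpr ⟨mem_univ ω, hg⟩⟩
  have hlower : (2 : ℝ) ^ K ≤ ∑ g : ι → Bool,
      (#{ω : ι × ι → Bool | threshold m (size g) < |discrepancy ω fun i => ind (g i)|} : ℝ) := by
    have := (card_le_card hcover).trans card_biUnion_le
    rw [card_univ, Fintype.card_fun, Fintype.card_bool] at this
    exact_mod_cast this
  have hsmall : Fintype.card ι * exp (-(2 * m / 10 ^ 6)) ≤ 1 := by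
    calc _ ≤ exp (m / 10 ^ 8) * exp (-(2 * m / 10 ^ 6)) := by gcongr
      _ ≤ 1 := by rw [← exp_add, exp_le_one_iff]; linarith
  have hupper : ∑ g : ι → Bool,
      (#{ω : ι × ι → Bool | threshold m (size g) < |discrepancy ω fun i => ind (g i)|} : ℝ)
      ≤ 2 * 2 ^ K * exp (-m ^ 2 / 10 ^ 6) * exp 1 := by
    calc _ ≤ ∑ g : ι → Bool, 2 * 2 ^ K * exp (-m ^ 2 / 10 ^ 6)
          * ∏ i, exp (-(2 * m / 10 ^ 6) * ind (g i)) :=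
          sum_le_sum fun g _ => card_lt_abs_discrepancy_ind_le (by linarith) g
      _ ≤ 2 * 2 ^ K * exp (-m ^ 2 / 10 ^ 6) * exp 1 := by
          rw [← mul_sum]
          gcongr
          exact (sum_prod_exp_neg_mul_ind_le _).trans (exp_le_exp.mpr hsmall)
  have hconst : 2 * exp (-m ^ 2 / 10 ^ 6) * exp 1 < 1 := by
    calc _ ≤ 2 * exp (-1) := by
          rw [mul_assoc, ← exp_add]
          gcongr
          nlinarith
      _ < 1 := by
          rw [exp_neg, ← div_eq_mul_inv, div_lt_one (exp_pos 1)]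
          linarith [exp_one_gt_d9]
  have h2K : (0 : ℝ) < 2 ^ K := by positivity
  nlinarith

end GoodColouring

section RandomSubset

variable {ι : Type*} [Fintype ι]

def weight (w : ι → ℝ) (g : ι → Bool) : ℝ := ∏ i, if g i then w i else 1 - w i

lemma weight_nonneg {w : ι → ℝ} (hw : ∀ i, w i ∈ Set.Icc (0 : ℝ) 1) (g : ι → Bool) :
    0 ≤ weight w g :=
  prod_nonneg fun i _ => by split_ifs <;> linarith [(hw i).1, (hw i).2]

variable [DecidableEq ι]

lemma sum_weight_mul_prod_ind (w : ι → ℝ) (A : Finset ι) :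
    ∑ g, weight w g * ∏ i ∈ A, ind (g i) = ∏ i ∈ A, w i := by
  have hfactor : ∀ g : ι → Bool, weight w g * ∏ i ∈ A, ind (g i)
      = ∏ i, (if g i then w i else 1 - w i) * (if i ∈ A then ind (g i) else 1) := by
    intro g
    rw [prod_mul_distrib, prod_ite_mem, univ_inter, weight]
  have hrestrict := prod_ite_mem univ A w
  rw [univ_inter] at hrestrict
  simp_rw [hfactor]
  rw [← Fintype.prod_sum fun i b => (if b then w i else 1 - w i) * (if i ∈ A then ind b else 1),
    ← hrestrict]
  refine prod_congr rfl fun i _ => ?_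
  by_cases hi : i ∈ A <;> simp [hi, ind]

lemma sum_weight_mul_ind (w : ι → ℝ) (i : ι) : ∑ g, weight w g * ind (g i) = w i := by
  simpa using sum_weight_mul_prod_ind w {i}

lemma sum_weight_mul_ind_mul_ind (w : ι → ℝ) (i j : ι) :
    ∑ g, weight w g * (ind (g i) * ind (g j)) = ∏ k ∈ {i, j}, w k := by
  rw [← sum_weight_mul_prod_ind]
  refine sum_congr rfl fun g _ => ?_
  rcases eq_or_ne i j with rfl | hij
  · simp [← sq, ind_sq]
  · rw [prod_pair hij]

lemma sum_weight_mul_size (w : ι → ℝ) : ∑ g, weight w g * size g = ∑ i, w i := by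
  simp_rw [size, mul_sum]
  rw [sum_comm]
  simp_rw [sum_weight_mul_ind]

lemma sum_weight_mul_size_sq_le (w : ι → ℝ) :
    ∑ g, weight w g * size g ^ 2 ≤ (∑ i, w i) ^ 2 + ∑ i, w i := by
  calc ∑ g, weight w g * size g ^ 2 = ∑ i, ∑ j, ∏ k ∈ {i, j}, w k := by
        simp_rw [size, sq, sum_mul_sum, mul_sum, ← sum_weight_mul_ind_mul_ind]
        rw [sum_comm]
        exact sum_congr rfl fun i _ => sum_comm
    _ ≤ ∑ i, ∑ j, (w i * w j + if i = j then w i else 0) := by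
        gcongr with i _ j _
        rcases eq_or_ne i j with rfl | hij
        · simp [mul_self_nonneg]
        · simp [prod_pair hij, hij]
    _ = (∑ i, w i) ^ 2 + ∑ i, w i := by
        simp_rw [sum_add_distrib, sum_ite_eq, mem_univ, if_true, ← sum_mul_sum, sq]

end RandomSubset

section Averaging

variable {ι : Type*} [Fintype ι] [LinearOrder ι]

lemma discrepancy_eq_sum_weight_mul (ω : ι × ι → Bool) (w : ι → ℝ) :
    discrepancy ω w = ∑ g, weight w g * discrepancy ω fun i => ind (g i) := by
  simp_rw [discrepancy, mul_sum]
  symm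
  rw [sum_comm]
  refine sum_congr rfl fun i _ => ?_
  rw [sum_comm]
  refine sum_congr rfl fun j _ => ?_
  split_ifs with hij
  · rw [← prod_pair hij.ne, ← sum_weight_mul_ind_mul_ind, mul_sum]
    exact sum_congr rfl fun g _ => by ring
  · simp

lemma abs_discrepancy_le {m : ℝ} {ω : ι × ι → Bool} (hω : Balanced m ω) {w : ι → ℝ}
    (hw : ∀ i, w i ∈ Set.Icc (0 : ℝ) 1) :
    |discrepancy ω w| ≤ ((∑ i, w i) ^ 2 + ∑ i, w i + m * ∑ i, w i) / 1000 := by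
  rw [discrepancy_eq_sum_weight_mul]
  calc _ ≤ ∑ g, |weight w g * discrepancy ω fun i => ind (g i)| := abs_sum_le_sum_abs _ _
    _ ≤ ∑ g, weight w g * threshold m (size g) := by
        gcongr with g
        rw [abs_mul, abs_of_nonneg (weight_nonneg hw g)]
        exact mul_le_mul_of_nonneg_left (hω g) (weight_nonneg hw g)
    _ = (∑ g, weight w g * size g ^ 2 + m * ∑ g, weight w g * size g) / 1000 := by
        simp_rw [threshold, mul_sum, ← sum_add_distrib, sum_div]
        exact sum_congr rfl fun g _ => by ring
    _ ≤ _ := by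
        rw [sum_weight_mul_size]
        gcongr
        exact sum_weight_mul_size_sq_le w

end Averaging

section ColourClasses

variable {ι : Type*} [LinearOrder ι]

def colouring (ω : ι × ι → Bool) (i j : ι) : Bool := ω (min i j, max i j)

lemma colouring_comm (ω : ι × ι → Bool) (i j : ι) : colouring ω i j = colouring ω j i := by
  simp [colouring, min_comm, max_comm]

variable [Fintype ι]

lemma sum_colour_class_eq (ω : ι × ι → Bool) (w : ι → ℝ) (col : Bool) :
    (∑ i, ∑ j, if i < j ∧ colouring ω i j = col then w i * w j else 0)
      = ((∑ i, ∑ j, if i < j then w i * w j else 0) + spin col * discrepancy ω w) / 2 := by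
  rw [discrepancy, mul_sum, ← sum_add_distrib, sum_div]
  refine sum_congr rfl fun i _ => ?_
  rw [mul_sum, ← sum_add_distrib, sum_div]
  refine sum_congr rfl fun j _ => ?_
  by_cases hij : i < j
  · simp only [hij, true_and, if_true, colouring, min_eq_left hij.le, max_eq_right hij.le]
    cases ω (i, j) <;> cases col <;> simp [spin]
  · simp [hij]

lemma sum_colour_class_lt {m : ℝ} (hm : 100 ≤ m) {ω : ι × ι → Bool} (hω : Balanced m ω)
    {w : ι → ℝ} (hw : ∀ i, w i ∈ Set.Icc (0 : ℝ) 1) (hx : m ≤ ∑ i, w i) (col : Bool) :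
    (∑ i, ∑ j, if i < j ∧ colouring ω i j = col then w i * w j else 0)
      < 0.51 * ((∑ i, w i) * ((∑ i, w i) - 1) / 2) := by
  rw [sum_colour_class_eq]
  have hpairs := two_mul_sum_lt_le_sq w fun i => (hw i).1
  have hdisc := abs_discrepancy_le hω hw
  have hsign : spin col * discrepancy ω w ≤ |discrepancy ω w| := by
    calc _ ≤ |spin col * discrepancy ω w| := le_abs_self _
      _ = |discrepancy ω w| := by rw [abs_mul]; cases col <;> simp [spin]
  set x := ∑ i, w i
  nlinarith

end ColourClasses

lemma sBound_le_exp (m : ℕ) : (sBound m : ℝ) ≤ exp (m / 10 ^ 8) := by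
  refine (Nat.floor_le (by positivity)).trans ?_
  rw [rpow_def_of_pos two_pos, exp_le_exp]
  have : log 2 ≤ 1 := by linarith [log_two_lt_d9]
  have : (0 : ℝ) ≤ m / 10 ^ 8 := by positivity
  nlinarith

end GrahamRodlRucinski

/-- **Graham–Rödl–Ruciński coloring.**  For `m ≥ 10⁹` and `s = ⌊2^(10⁻⁸·m)⌋` there is a
partition of the edges of `K_s` into two classes (represented by a symmetric `Bool`-valued
coloring `c` of pairs) such that for every weight function `w : [s] → [0,1]` with total
weight `x = Σ w(i) ≥ m` and each class, the weight of that class,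
`Σ_{ij in the class} w(i)·w(j)`, is less than `0.51·x(x−1)/2`. -/
theorem stmt_2 (m : ℕ) (hm : 10 ^ 9 ≤ m) :
    ∃ c : Fin (sBound m) → Fin (sBound m) → Bool,
      (∀ i j, c i j = c j i) ∧
      ∀ w : Fin (sBound m) → ℝ, (∀ i, w i ∈ Set.Icc (0 : ℝ) 1) → (m : ℝ) ≤ ∑ i, w i →
        ∀ col : Bool,
          (∑ i, ∑ j, if i < j ∧ c i j = col then w i * w j else 0)
            < 0.51 * ((∑ i, w i) * ((∑ i, w i) - 1) / 2) := by
  have hm' : (10 : ℝ) ^ 9 ≤ m := by exact_mod_cast hm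
  obtain ⟨ω, hω⟩ := GrahamRodlRucinski.exists_balanced (ι := Fin (sBound m)) (m := m)
    (by linarith) (by simpa using GrahamRodlRucinski.sBound_le_exp m)
  exact ⟨GrahamRodlRucinski.colouring ω, GrahamRodlRucinski.colouring_comm ω,
    fun w hw hx col => GrahamRodlRucinski.sum_colour_class_lt (by linarith) hω hw hx col⟩
end

section
/- Let ℓ ≤ r be integers and let x_ℓ ≤ x_{ℓ+1} ≤ … ≤ x_{r+1} be nonnegative integers with x_ℓ < x_{r+1}. Then max_{ℓ ≤ i ≤ r} δ(x_i, x_{i+1}) = δ(x_ℓ, x_{r+1}) ≥ 1, and there is exactly one index i* ∈ {ℓ, …, r} with δ(x_{i*}, x_{i*+1}) = δ(x_ℓ, x_{r+1}); moreover δ(x_j, x_{j+1}) < δ(x_ℓ, x_{r+1}) for every other j ∈ {ℓ, …, r}. -/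
/-- `bitfn x i` is the coefficient `a_{i-1}` in the binary representation
`x = Σ_{i≥0} a_i 2^i`. -/
def bitfn (x i : ℕ) : ℕ := x / 2 ^ (i - 1) % 2

/-- `deltafn x y = max { i ≥ 1 | bit(x,i) ≠ bit(y,i) }`, with `deltafn x x = 0`
(the set is then empty and `sSup ∅ = 0` in `ℕ`). -/
noncomputable def deltafn (x y : ℕ) : ℕ := sSup {i : ℕ | 1 ≤ i ∧ bitfn x i ≠ bitfn y i}

/-! `δ(x, y) ≤ k` says exactly that `x` and `y` agree after their `k` lowest bits are dropped,
i.e. `x / 2 ^ k = y / 2 ^ k`. Write `δ(x_ℓ, x_{r+1}) = k + 1`. The quotients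
`q_i = x_i / 2 ^ k` form a monotone sequence that rises from `q_ℓ` to `q_{r+1} = q_ℓ + 1`
without changing `q_i / 2`, so it has exactly one ascent `i*`. There `δ(x_{i*}, x_{i*+1}) = k + 1`,
and at every other step `q_j = q_{j+1}`, i.e. `δ(x_j, x_{j+1}) ≤ k`. -/

lemma bitfn_add_one_eq_iff {x y i : ℕ} :
    bitfn x (i + 1) = bitfn y (i + 1) ↔ x.testBit i = y.testBit i := by
  rw [bitfn, bitfn, Nat.add_sub_cancel, ← Nat.toNat_testBit, ← Nat.toNat_testBit]
  cases x.testBit i <;> cases y.testBit i <;> decide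

lemma Nat.div_two_pow_eq_iff_testBit_eq {x y k : ℕ} :
    x / 2 ^ k = y / 2 ^ k ↔ ∀ i, k ≤ i → x.testBit i = y.testBit i := by
  refine ⟨fun h i hi => ?_, fun h => Nat.eq_of_testBit_eq fun j => ?_⟩
  · simpa [Nat.testBit_div_two_pow, Nat.sub_add_cancel hi] using
      congrArg (Nat.testBit · (i - k)) h
  · simpa [Nat.testBit_div_two_pow] using h (j + k) (by omega)

lemma bitfn_eq_of_lt_iff {x y k : ℕ} :
    (∀ i, k < i → bitfn x i = bitfn y i) ↔ x / 2 ^ k = y / 2 ^ k := by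
  rw [Nat.div_two_pow_eq_iff_testBit_eq]
  refine ⟨fun h i hi => bitfn_add_one_eq_iff.1 (h (i + 1) (by omega)), fun h i hi => ?_⟩
  obtain ⟨i, rfl⟩ := Nat.exists_eq_add_of_le' (by omega : 1 ≤ i)
  exact bitfn_add_one_eq_iff.2 (h i (by omega))

lemma deltafn_le_iff {x y k : ℕ} : deltafn x y ≤ k ↔ x / 2 ^ k = y / 2 ^ k := by
  have hS (k : ℕ) : (∀ i ∈ {i : ℕ | 1 ≤ i ∧ bitfn x i ≠ bitfn y i}, i ≤ k) ↔
      x / 2 ^ k = y / 2 ^ k := by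
    rw [← bitfn_eq_of_lt_iff]
    exact forall_congr' fun i => by grind
  have hlt {z : ℕ} (hz : z ≤ x + y) : z < 2 ^ (x + y) :=
    Nat.lt_two_pow_self.trans_le (Nat.pow_le_pow_right two_pos hz)
  have hbdd : BddAbove {i : ℕ | 1 ≤ i ∧ bitfn x i ≠ bitfn y i} :=
    ⟨x + y, (hS _).2 <| by
      rw [Nat.div_eq_of_lt (hlt (by omega)), Nat.div_eq_of_lt (hlt (by omega))]⟩
  exact (csSup_le_iff' hbdd).trans (hS k)

lemma deltafn_le_add_one_iff {x y k : ℕ} :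
    deltafn x y ≤ k + 1 ↔ x / 2 ^ k / 2 = y / 2 ^ k / 2 := by
  rw [deltafn_le_iff, pow_succ, Nat.div_div_eq_div_mul, Nat.div_div_eq_div_mul]

lemma one_le_deltafn_of_ne {x y : ℕ} (h : x ≠ y) : 1 ≤ deltafn x y := by
  by_contra! h0
  exact h (by simpa using deltafn_le_iff.1 (Nat.lt_one_iff.1 h0).le)

lemma exists_ne_add_one_of_ne {α : Type*} (q : ℕ → α) {l r : ℕ} (hlr : l ≤ r + 1)
    (h : q l ≠ q (r + 1)) : ∃ i ∈ Finset.Icc l r, q i ≠ q (i + 1) := by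
  by_contra! hconst
  have hq (j : ℕ) (hlj : l ≤ j) : j ≤ r + 1 → q j = q l := by
    induction j, hlj using Nat.le_induction with
    | base => exact fun _ => rfl
    | succ j hlj ih =>
      intro hj
      rw [← hconst j (Finset.mem_Icc.2 ⟨hlj, by omega⟩), ih (by omega)]
  exact h (hq (r + 1) hlr le_rfl).symm

lemma eq_of_ne_add_one_of_ne_add_one {q : ℕ → ℕ} {l r : ℕ}
    (hq : MonotoneOn q (Set.Icc l (r + 1))) (h : q (r + 1) ≤ q l + 1) {i j : ℕ}
    (hi : i ∈ Finset.Icc l r) (hj : j ∈ Finset.Icc l r)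
    (hqi : q i ≠ q (i + 1)) (hqj : q j ≠ q (j + 1)) : i = j := by
  by_contra hne
  wlog hij : i < j generalizing i j
  · exact this hj hi hqj hqi (Ne.symm hne) (by omega)
  rw [Finset.mem_Icc] at hi hj
  have hle (a b : ℕ) (ha : l ≤ a) (hab : a ≤ b) (hb : b ≤ r + 1) : q a ≤ q b :=
    hq ⟨ha, hab.trans hb⟩ ⟨ha.trans hab, hb⟩ hab
  have := hle l i le_rfl hi.1 (by omega)
  have := hle i (i + 1) (by omega) (by omega) (by omega)
  have := hle (i + 1) j (by omega) hij (by omega)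
  have := hle j (j + 1) (by omega) (by omega) (by omega)
  have := hle (j + 1) (r + 1) (by omega) (by omega) le_rfl
  omega

/-- Let `ℓ ≤ r` and let `x_ℓ ≤ … ≤ x_{r+1}` be nonnegative integers with `x_ℓ < x_{r+1}`.
Then `max_{ℓ ≤ i ≤ r} δ(x_i, x_{i+1}) = δ(x_ℓ, x_{r+1}) ≥ 1`, this maximum is attained at a
unique index `i* ∈ {ℓ,…,r}`, and `δ(x_j, x_{j+1}) < δ(x_ℓ, x_{r+1})` for every other
`j ∈ {ℓ,…,r}`. -/
theorem stmt_6 (l r : ℕ) (hlr : l ≤ r) (x : ℕ → ℕ)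
    (hmono : ∀ i, l ≤ i → i ≤ r → x i ≤ x (i + 1)) (hx : x l < x (r + 1)) :
    (Finset.Icc l r).sup (fun i => deltafn (x i) (x (i + 1))) = deltafn (x l) (x (r + 1)) ∧
    1 ≤ deltafn (x l) (x (r + 1)) ∧
    ∃ i ∈ Finset.Icc l r, deltafn (x i) (x (i + 1)) = deltafn (x l) (x (r + 1)) ∧
      ∀ j ∈ Finset.Icc l r, j ≠ i →
        deltafn (x j) (x (j + 1)) < deltafn (x l) (x (r + 1)) := by
  obtain ⟨k, hk⟩ := Nat.exists_eq_add_of_le' (one_le_deltafn_of_ne hx.ne)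
  rw [hk]
  set q : ℕ → ℕ := fun j => x j / 2 ^ k
  have hq : MonotoneOn q (Set.Icc l (r + 1)) := fun a ha b hb hab =>
    Nat.div_le_div_right <| monotoneOn_of_le_add_one Set.ordConnected_Icc
      (fun c _ hc hc' => hmono c hc.1 (by have := hc'.2; omega)) ha hb hab
  have hq_le {a : ℕ} (ha : l ≤ a) (ha' : a ≤ r + 1) : q l ≤ q a ∧ q a ≤ q (r + 1) :=
    ⟨hq ⟨le_rfl, by omega⟩ ⟨ha, ha'⟩ ha, hq ⟨ha, ha'⟩ ⟨by omega, le_rfl⟩ ha'⟩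
  have hq_half : q l / 2 = q (r + 1) / 2 := deltafn_le_add_one_iff.1 hk.le
  have hq_ne : q l ≠ q (r + 1) := fun h => by
    have := deltafn_le_iff.2 h
    omega
  have hq_succ : q (r + 1) ≤ q l + 1 := by omega
  have hδ_le (j : ℕ) (hj : j ∈ Finset.Icc l r) : deltafn (x j) (x (j + 1)) ≤ k + 1 := by
    rw [Finset.mem_Icc] at hj
    have := hq_le hj.1 (by omega)
    have := hq_le (a := j + 1) (by omega) (by omega)
    exact deltafn_le_add_one_iff.2 (show q j / 2 = q (j + 1) / 2 by omega)
  obtain ⟨i, hi, hqi⟩ := exists_ne_add_one_of_ne q (by omega) hq_ne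
  have hδ_i : deltafn (x i) (x (i + 1)) = k + 1 :=
    le_antisymm (hδ_le i hi) (by by_contra! h; exact hqi (deltafn_le_iff.1 (by omega)))
  have hδ_lt (j : ℕ) (hj : j ∈ Finset.Icc l r) (hji : j ≠ i) :
      deltafn (x j) (x (j + 1)) < k + 1 :=
    Nat.lt_succ_of_le <| deltafn_le_iff.2 <| by
      by_contra hqj
      exact hji (eq_of_ne_add_one_of_ne_add_one hq hq_succ hj hi hqj hqi)
  exact ⟨le_antisymm (Finset.sup_le hδ_le) (Finset.le_sup_of_le hi hδ_i.ge), le_add_self,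
    i, hi, hδ_i, hδ_lt⟩
end

section
/- For any integer k ≥ 1 and real ε > 0, there exist constants d = d(k,ε) and M_0 = M_0(k,ε) such that for all integers M ≥ M_0 there is a graph F on M vertices with maximum degree at most d satisfying: for every set U ⊆ V(F) with |U| ≥ ε·M, the number of vertices of F having fewer than k neighbors in U is at most ε·M. -/
/-!
Let ω : Fin M × Fin M → Fin M be uniform and join u ≠ v when ω (u, v) < C or ω (v, u) < C, so
that each ordered pair is marked independently with probability C / M. Put t = ⌈εM/4⌉. For
disjoint t-sets B and W, the weight 2^(kt) 2^(-#marks from B to W) is at least 1 if no vertex of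
B has k neighbours in W, and its expectation factorises as
2^(kt) (1 - C/(2M))^(t²) ≤ 2^(kt) e^(-Ct²/(2M)); over the at most 4^M pairs (B, W) this totals
less than 1/2 once C is of order 1/ε² + k/ε. As the expected number of marks is CM, some ω has
fewer than 2CM marks, hence fewer than t vertices of degree above D ≈ 16C/ε, and joins every such
pair (B, W). Deleting the high-degree vertices caps all degrees at D. For |U| ≥ εM, apart from
the deleted vertices fewer than t vertices have fewer than k neighbours in U, since otherwise t of
them and t further vertices of U would form a pair that is not joined; so fewer than 2t ≤ εM
vertices are bad.
-/

attribute [local instance] Classical.propDecidable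

open Finset
open scoped BigOperators

theorem Fintype.expect_prod_apply {α β R : Type*} [Fintype α] [DecidableEq α] [Fintype β]
    [Nonempty β] [Semifield R] [CharZero R] (K : Finset α) (φ : β → R) :
    𝔼 ω : α → β, ∏ p ∈ K, φ (ω p) = (𝔼 b, φ b) ^ #K := by
  set ψ : α → β → R := fun p b => if p ∈ K then φ b else 1
  have hψ : ∀ ω : α → β, ∏ p ∈ K, φ (ω p) = ∏ p, ψ p (ω p) := fun ω => by
    simp [ψ]
  have hprod : 𝔼 ω : α → β, ∏ p, ψ p (ω p) = ∏ p, 𝔼 b, ψ p b := by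
    simp only [Fintype.expect_eq_sum_div_card, ← Fintype.prod_sum, prod_div_distrib,
      Fintype.card_fun, Nat.cast_pow, prod_const, card_univ]
  have hK : ∀ p, 𝔼 b, ψ p b = if p ∈ K then 𝔼 b, φ b else 1 := fun p => by
    by_cases hp : p ∈ K <;> simp [ψ, hp]
  simp only [hψ, hprod, hK, prod_ite_mem, prod_const]

lemma Fin.expect_ite_val_lt {N C : ℕ} [NeZero N] (hC : C ≤ N) :
    𝔼 x : Fin N, (if (x : ℕ) < C then 1 else 0 : ℝ) = C / N := by
  rw [Fintype.expect_eq_sum_div_card, sum_boole, Fin.card_filter_val_lt, min_eq_right hC,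
    Fintype.card_fin]

namespace SimpleGraph

variable {V : Type*} (G : SimpleGraph V)

def IsJoined (k t : ℕ) : Prop :=
  ∀ B W : Finset V, #B = t → #W = t → Disjoint B W → ∃ v ∈ B, k ≤ #{u ∈ W | G.Adj v u}

variable [Fintype V] {G}

lemma IsJoined.card_filter_lt {k t : ℕ} (hG : G.IsJoined k t) {U : Finset V}
    (hU : 2 * t ≤ #U) : #{v | #{u ∈ U | G.Adj v u} < k} < t := by
  by_contra! h
  obtain ⟨B, hBsub, hB⟩ := exists_subset_card_eq h
  obtain ⟨W, hWsub, hW⟩ := exists_subset_card_eq (s := U \ B) (n := t)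
    (by have := le_card_sdiff B U; omega)
  obtain ⟨v, hvB, hv⟩ := hG B W hB hW (disjoint_of_subset_right hWsub disjoint_sdiff)
  have hfew := (mem_filter.mp (hBsub hvB)).2
  have hWU : #{u ∈ W | G.Adj v u} ≤ #{u ∈ U | G.Adj v u} :=
    card_le_card (filter_subset_filter _ (hWsub.trans sdiff_subset))
  omega

lemma card_filter_lt_card_adj_mul_le (G : SimpleGraph V) (D : ℕ) :
    #{v | D < #{u | G.Adj v u}} * (D + 1) ≤ ∑ v, #{u | G.Adj v u} :=
  calc #{v | D < #{u | G.Adj v u}} * (D + 1)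
      ≤ ∑ v ∈ {v | D < #{u | G.Adj v u}}, #{u | G.Adj v u} := by
        rw [← smul_eq_mul]
        exact card_nsmul_le_sum _ _ _ fun v hv => (mem_filter.mp hv).2
    _ ≤ ∑ v, #{u | G.Adj v u} := sum_le_sum_of_subset (filter_subset _ _)

theorem IsJoined.exists_degree_le {k t D : ℕ} (hG : G.IsJoined k t)
    (hH : #{v | D < #{u | G.Adj v u}} ≤ t) :
    ∃ F : SimpleGraph V, (∀ v, #{u | F.Adj v u} ≤ D) ∧
      ∀ U : Finset V, 3 * t ≤ #U → #{v | #{u ∈ U | F.Adj v u} < k} < 2 * t := by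
  set H : Finset V := {v | D < #{u | G.Adj v u}}
  set F := ((⊤ : G.Subgraph).deleteVerts H).spanningCoe
  have hF : ∀ u v, F.Adj u v ↔ u ∉ H ∧ v ∉ H ∧ G.Adj u v := fun u v => by simp [F]
  refine ⟨F, fun v => ?_, fun U hU => ?_⟩
  · by_cases hv : v ∈ H
    · simp [hF, hv]
    · calc #{u | F.Adj v u} ≤ #{u | G.Adj v u} :=
            card_le_card (monotone_filter_right _ fun u _ h => ((hF v u).1 h).2.2)
        _ ≤ D := by simpa [H] using hv
  · set Bad : Finset V := {v | #{u ∈ U \ H | G.Adj v u} < k}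
    have hsub : ({v | #{u ∈ U | F.Adj v u} < k} : Finset V) ⊆ H ∪ Bad := by
      intro v hv
      by_cases hvH : v ∈ H
      · exact mem_union_left _ hvH
      refine mem_union_right _ (mem_filter.mpr ⟨mem_univ _, ?_⟩)
      refine lt_of_le_of_lt (card_le_card fun u hu => ?_) (mem_filter.mp hv).2
      simp only [mem_filter, mem_sdiff] at hu ⊢
      exact ⟨hu.1.1, (hF v u).2 ⟨hvH, hu.1.2, hu.2⟩⟩
    have hUH : 2 * t ≤ #(U \ H) := by have := le_card_sdiff H U; omega
    calc #{v | #{u ∈ U | F.Adj v u} < k} ≤ #(H ∪ Bad) := card_le_card hsub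
      _ ≤ #H + #Bad := card_union_le _ _
      _ < t + t := add_lt_add_of_le_of_lt hH (hG.card_filter_lt hUH)
      _ = 2 * t := (two_mul t).symm

end SimpleGraph

namespace RandomGraph

variable {V : Type*} {N : ℕ}

def markGraph (C : ℕ) (ω : V × V → Fin N) : SimpleGraph V :=
  SimpleGraph.fromRel fun u v => (ω (u, v) : ℕ) < C

lemma card_marked_le_card_adj (C : ℕ) (ω : V × V → Fin N) {B W : Finset V}
    (hBW : Disjoint B W) {v : V} (hv : v ∈ B) :
    #{u ∈ W | (ω (v, u) : ℕ) < C} ≤ #{u ∈ W | (markGraph C ω).Adj v u} := by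
  refine card_le_card fun u hu => ?_
  simp only [mem_filter, markGraph, SimpleGraph.fromRel_adj] at hu ⊢
  exact ⟨hu.1, fun h => disjoint_left.mp hBW hv (h ▸ hu.1), Or.inl hu.2⟩

/-- Chernoff-type weight: it is at least `1` when no vertex of `B` has more than `k` marks into
`W`, and its expectation factorises over the pairs in `B ×ˢ W`. -/
noncomputable def pairWeight (k C : ℕ) (ω : V × V → Fin N) (B W : Finset V) : ℝ :=
  2 ^ (k * #B) * ∏ v ∈ B, 2⁻¹ ^ #{u ∈ W | (ω (v, u) : ℕ) < C}

lemma pairWeight_nonneg (k C : ℕ) (ω : V × V → Fin N) (B W : Finset V) :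
    0 ≤ pairWeight k C ω B W := by
  unfold pairWeight; positivity

lemma one_le_pairWeight {k C : ℕ} {ω : V × V → Fin N} {B W : Finset V}
    (h : ∀ v ∈ B, #{u ∈ W | (ω (v, u) : ℕ) < C} ≤ k) : 1 ≤ pairWeight k C ω B W :=
  calc (1 : ℝ) = 2 ^ (k * #B) * ∏ _v ∈ B, 2⁻¹ ^ k := by
        rw [prod_const, ← pow_mul, ← mul_pow]; norm_num
    _ ≤ pairWeight k C ω B W :=
        mul_le_mul_of_nonneg_left (prod_le_prod (fun _ _ => by positivity)
          fun v hv => pow_le_pow_of_le_one (by norm_num) (by norm_num) (h v hv)) (by positivity)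

variable [Fintype V]

def marks (C : ℕ) (ω : V × V → Fin N) : Finset (V × V) := {p | (ω p : ℕ) < C}

lemma sum_card_adj_le (C : ℕ) (ω : V × V → Fin N) :
    ∑ v, #{u | (markGraph C ω).Adj v u} ≤ 2 * #(marks C ω) := by
  have hout : ∑ v, #{u | (ω (v, u) : ℕ) < C} = #(marks C ω) := by
    simp only [marks, card_filter, Fintype.sum_prod_type]
  have hin : ∑ v, #{u | (ω (u, v) : ℕ) < C} = #(marks C ω) := by
    simp only [marks, card_filter, Fintype.sum_prod_type]
    exact sum_comm
  calc ∑ v, #{u | (markGraph C ω).Adj v u}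
      ≤ ∑ v, (#{u | (ω (v, u) : ℕ) < C} + #{u | (ω (u, v) : ℕ) < C}) := by
        refine sum_le_sum fun v _ => (card_le_card fun u hu => ?_).trans (card_union_le _ _)
        simp only [markGraph, SimpleGraph.fromRel_adj, mem_filter, mem_univ, true_and,
          mem_union] at hu ⊢
        exact hu.2
    _ = 2 * #(marks C ω) := by rw [sum_add_distrib, hout, hin, two_mul]

lemma card_filter_lt_card_adj_lt {C D t : ℕ} {ω : V × V → Fin N}
    (h : 2 * #(marks C ω) < t * (D + 1)) : #{v | D < #{u | (markGraph C ω).Adj v u}} < t :=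
  lt_of_mul_lt_mul_right (((markGraph C ω).card_filter_lt_card_adj_mul_le D).trans
    (sum_card_adj_le C ω) |>.trans_lt h) (Nat.zero_le _)

lemma expect_card_marks [NeZero N] {C : ℕ} (hC : C ≤ N) :
    𝔼 ω : V × V → Fin N, (#(marks C ω) : ℝ) = Fintype.card V ^ 2 * (C / N) := by
  have hp : ∀ p : V × V, 𝔼 ω : V × V → Fin N, (if (ω p : ℕ) < C then 1 else 0 : ℝ) = C / N :=
    fun p => by
      simpa [Fin.expect_ite_val_lt hC] using
        Fintype.expect_prod_apply {p} fun x : Fin N => (if (x : ℕ) < C then 1 else 0 : ℝ)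
  simp only [marks, natCast_card_filter]
  rw [expect_sum_comm]
  simp [hp, sq]

lemma expect_pairWeight [NeZero N] {C : ℕ} (hC : C ≤ N) (k : ℕ) (B W : Finset V) :
    𝔼 ω : V × V → Fin N, pairWeight k C ω B W =
      2 ^ (k * #B) * (1 - C / (2 * N)) ^ (#B * #W) := by
  set φ : Fin N → ℝ := fun x => if (x : ℕ) < C then 2⁻¹ else 1
  have hφ : 𝔼 x, φ x = 1 - C / (2 * N) := by
    have : φ = fun x : Fin N => 1 - 2⁻¹ * (if (x : ℕ) < C then 1 else 0 : ℝ) := by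
      ext (x : Fin N); by_cases h : (x : ℕ) < C <;> norm_num [φ, h]
    rw [this, expect_sub_distrib, Fintype.expect_const, ← mul_expect, Fin.expect_ite_val_lt hC]
    ring
  have hprod : ∀ ω : V × V → Fin N,
      ∏ v ∈ B, (2⁻¹ : ℝ) ^ #{u ∈ W | (ω (v, u) : ℕ) < C} = ∏ p ∈ B ×ˢ W, φ (ω p) := fun ω => by
    rw [prod_product]
    refine prod_congr rfl fun v _ => ?_
    rw [prod_ite, prod_const_one, mul_one, prod_const]
  simp only [pairWeight, hprod, ← mul_expect, Fintype.expect_prod_apply, hφ, card_product]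

noncomputable def disjointPairs (t : ℕ) : Finset (Finset V × Finset V) :=
  {BW | #BW.1 = t ∧ #BW.2 = t ∧ Disjoint BW.1 BW.2}

noncomputable def failureWeight (k C t : ℕ) (ω : V × V → Fin N) : ℝ :=
  ∑ BW ∈ disjointPairs t, pairWeight k C ω BW.1 BW.2

lemma failureWeight_nonneg (k C t : ℕ) (ω : V × V → Fin N) : 0 ≤ failureWeight k C t ω :=
  sum_nonneg fun _ _ => pairWeight_nonneg _ _ _ _ _

lemma isJoined_of_failureWeight_lt_one {k C t : ℕ} {ω : V × V → Fin N}
    (h : failureWeight k C t ω < 1) : (markGraph C ω).IsJoined k t := by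
  intro B W hB hW hBW
  by_contra! hfew
  have h1 : 1 ≤ pairWeight k C ω B W := one_le_pairWeight fun v hv =>
    ((card_marked_le_card_adj C ω hBW hv).trans_lt (hfew v hv)).le
  have h2 : pairWeight k C ω B W ≤ failureWeight k C t ω :=
    single_le_sum (f := fun BW => pairWeight k C ω BW.1 BW.2) (a := (B, W))
      (fun _ _ => pairWeight_nonneg _ _ _ _ _) (mem_filter.mpr ⟨mem_univ _, hB, hW, hBW⟩)
  linarith

lemma expect_failureWeight_le [NeZero N] {C : ℕ} (hCN : C ≤ N) (k t : ℕ) :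
    𝔼 ω : V × V → Fin N, failureWeight k C t ω ≤
      4 ^ Fintype.card V * 2 ^ (k * t) * (1 - C / (2 * N)) ^ (t * t) := by
  have hcard : (#(disjointPairs (V := V) t) : ℝ) ≤ 4 ^ Fintype.card V := by
    have := card_le_univ (disjointPairs (V := V) t)
    simp only [Fintype.card_prod, Fintype.card_finset, ← mul_pow] at this
    exact_mod_cast this
  have hbase : (0 : ℝ) ≤ 1 - C / (2 * N) := by
    rw [sub_nonneg, div_le_one (mul_pos two_pos (Nat.cast_pos.mpr (NeZero.pos N)))]
    exact_mod_cast (by omega : C ≤ 2 * N)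
  calc 𝔼 ω : V × V → Fin N, failureWeight k C t ω
      = ∑ _BW ∈ disjointPairs (V := V) t, (2 : ℝ) ^ (k * t) * (1 - C / (2 * N)) ^ (t * t) := by
        simp only [failureWeight]
        rw [expect_sum_comm]
        refine sum_congr rfl fun BW hBW => ?_
        obtain ⟨h1, h2, -⟩ := (mem_filter.mp hBW).2
        rw [expect_pairWeight hCN, h1, h2]
    _ ≤ 4 ^ Fintype.card V * 2 ^ (k * t) * (1 - C / (2 * N)) ^ (t * t) := by
        rw [sum_const, nsmul_eq_mul, ← mul_assoc]
        gcongr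

theorem exists_markGraph [Nonempty V] {C D k t : ℕ} (hC : 0 < C) (hCN : C ≤ N)
    (hD : 4 * (Fintype.card V ^ 2 * (C / N) : ℝ) ≤ t * (D + 1))
    (hsmall : (4 : ℝ) ^ Fintype.card V * 2 ^ (k * t) * (1 - C / (2 * N)) ^ (t * t) < 2⁻¹) :
    ∃ ω : V × V → Fin N, #{v | D < #{u | (markGraph C ω).Adj v u}} < t ∧
      (markGraph C ω).IsJoined k t := by
  have : NeZero N := ⟨by omega⟩
  set E : ℝ := Fintype.card V ^ 2 * (C / N)
  have hE : 0 < E := mul_pos (pow_pos (Nat.cast_pos.mpr Fintype.card_pos) 2)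
    (div_pos (Nat.cast_pos.mpr hC) (Nat.cast_pos.mpr (by omega)))
  set f : (V × V → Fin N) → ℝ := fun ω => #(marks C ω) / (2 * E) + failureWeight k C t ω
  have hf : 𝔼 ω, f ω < 1 := by
    have hmarks : 𝔼 ω : V × V → Fin N, (#(marks C ω) : ℝ) = E := expect_card_marks hCN
    have : 𝔼 ω, f ω = 2⁻¹ + 𝔼 ω : V × V → Fin N, failureWeight k C t ω := by
      simp only [f, expect_add_distrib, ← expect_div, hmarks]
      field_simp
    linarith [expect_failureWeight_le (V := V) hCN k t]
  obtain ⟨ω, -, hω⟩ := exists_lt_of_expect_lt univ_nonempty hf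
  have hmarks : (0 : ℝ) ≤ #(marks C ω) / (2 * E) := by positivity
  have hfail := failureWeight_nonneg k C t ω
  refine ⟨ω, card_filter_lt_card_adj_lt ?_, isJoined_of_failureWeight_lt_one (by linarith)⟩
  have : (#(marks C ω) : ℝ) / (2 * E) < 1 := by linarith
  rw [div_lt_one (by positivity)] at this
  exact_mod_cast (by linarith : (2 * #(marks C ω) : ℝ) < t * (D + 1))

end RandomGraph

/-- `e^(-C t²/(2M))` beats `4^M 2^(kt) ≤ e^(2M + kt)` because `Cε/8 ≥ 8/ε + k + 1`. -/
lemma four_pow_mul_two_pow_mul_one_sub_pow_lt {ε : ℝ} (hε : 0 < ε) {M C k t : ℕ} (hM : 0 < M)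
    (hCM : C ≤ M) (ht : 1 ≤ t) (hεt : ε * M ≤ 4 * t) (hC : (64 / ε + 8 * k + 8) / ε ≤ C) :
    (4 : ℝ) ^ M * 2 ^ (k * t) * (1 - C / (2 * M)) ^ (t * t) < 2⁻¹ := by
  have hMr : (0 : ℝ) < M := Nat.cast_pos.mpr hM
  have htr : (1 : ℝ) ≤ t := Nat.one_le_cast.mpr ht
  set x : ℝ := C / (2 * M)
  have hx : x ≤ 1 := by
    rw [div_le_one (by positivity)]
    exact_mod_cast (by omega : C ≤ 2 * M)
  have hexponent : 2 * M + k * t + 1 ≤ x * (t * t) := by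
    have hCε : 64 / ε + 8 * k + 8 ≤ C * ε := (div_le_iff₀ hε).mp hC
    have hM8 : 2 * (M : ℝ) ≤ 8 * t / ε := by rw [le_div_iff₀ hε]; linarith
    have htM : ε / 8 ≤ t / (2 * M) := by
      rw [div_le_div_iff₀ (by norm_num) (by positivity)]; linarith
    calc 2 * M + k * t + 1 ≤ t * (64 / ε + 8 * k + 8) / 8 := by
          have : 8 * (t : ℝ) / ε = t * (64 / ε) / 8 := by ring
          nlinarith
      _ ≤ t * (C * ε) / 8 := by gcongr
      _ = C * t * (ε / 8) := by ring
      _ ≤ C * t * (t / (2 * M)) := by gcongr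
      _ = x * (t * t) := by simp only [x]; ring
  have hpow : (4 : ℝ) ^ M * 2 ^ (k * t) ≤ Real.exp (2 * M + k * t) := by
    have h2 : (2 : ℝ) ≤ Real.exp 1 := by linarith [Real.add_one_le_exp 1]
    calc (4 : ℝ) ^ M * 2 ^ (k * t) = 2 ^ (2 * M + k * t) := by
          rw [pow_add, pow_mul 2 2 M]; norm_num
      _ ≤ Real.exp 1 ^ (2 * M + k * t) := by gcongr
      _ = Real.exp (2 * M + k * t) := by rw [Real.exp_one_pow]; push_cast; ring_nf
  calc (4 : ℝ) ^ M * 2 ^ (k * t) * (1 - x) ^ (t * t)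
      ≤ Real.exp (2 * M + k * t) * Real.exp (-x) ^ (t * t) := by
        gcongr
        exact Real.one_sub_le_exp_neg x
    _ = Real.exp (2 * M + k * t - x * (t * t)) := by
        rw [← Real.exp_nat_mul, ← Real.exp_add]; push_cast; ring_nf
    _ ≤ Real.exp (-1) := Real.exp_le_exp.mpr (by linarith)
    _ < 2⁻¹ := by
        rw [Real.exp_neg, inv_lt_inv₀ (Real.exp_pos 1) two_pos]
        linarith [Real.exp_one_gt_d9]

lemma ceil_div_four_bounds {x : ℝ} (hx : 12 ≤ x) :
    x ≤ 4 * ⌈x / 4⌉₊ ∧ 3 * (⌈x / 4⌉₊ : ℝ) ≤ x ∧ 1 ≤ ⌈x / 4⌉₊ :=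
  ⟨by linarith [Nat.le_ceil (x / 4)],
    by linarith [Nat.ceil_lt_add_one (by linarith : 0 ≤ x / 4)],
    Nat.one_le_iff_ne_zero.mpr (Nat.ceil_pos.mpr (by linarith)).ne'⟩

open RandomGraph in
theorem stmt_11_general (k : ℕ) (ε : ℝ) (hε : 0 < ε) :
    ∃ d M₀ : ℕ, ∀ M : ℕ, M₀ ≤ M →
      ∃ F : SimpleGraph (Fin M),
        (∀ v : Fin M, (Finset.univ.filter fun u => F.Adj v u).card ≤ d) ∧
        ∀ U : Finset (Fin M), ε * (M : ℝ) ≤ (U.card : ℝ) →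
          (((Finset.univ.filter fun v : Fin M =>
              (U.filter fun u => F.Adj v u).card < k).card : ℝ)) ≤ ε * (M : ℝ) := by
  set C := ⌈(64 / ε + 8 * k + 8) / ε⌉₊
  have hC : 0 < C := Nat.ceil_pos.mpr (by positivity)
  refine ⟨⌈16 * C / ε⌉₊, C + ⌈12 / ε⌉₊, fun M hM => ?_⟩
  set D := ⌈16 * C / ε⌉₊
  set t := ⌈ε * M / 4⌉₊
  have hCM : C ≤ M := by omega
  have : NeZero M := ⟨by omega⟩
  have hεM : 12 ≤ ε * M := by
    have : 12 / ε ≤ M := (Nat.le_ceil _).trans (by exact_mod_cast (by omega : ⌈12 / ε⌉₊ ≤ M))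
    rwa [div_le_iff₀ hε, mul_comm] at this
  obtain ⟨hεt, h3t, ht⟩ := ceil_div_four_bounds hεM
  have hD : 4 * (Fintype.card (Fin M) ^ 2 * (C / M) : ℝ) ≤ t * (D + 1) := by
    have hMr : (0 : ℝ) < M := Nat.cast_pos.mpr (by omega)
    calc 4 * (Fintype.card (Fin M) ^ 2 * (C / M) : ℝ) = (ε * M / 4) * (16 * C / ε) := by
          rw [Fintype.card_fin]; field_simp; ring
      _ ≤ t * (D + 1) := by gcongr <;> linarith [Nat.le_ceil (16 * C / ε)]
  obtain ⟨ω, hH, hjoined⟩ := exists_markGraph hC hCM hD (by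
    simpa using four_pow_mul_two_pow_mul_one_sub_pow_lt hε (by omega) hCM ht hεt (Nat.le_ceil _))
  obtain ⟨F, hFdeg, hFU⟩ := hjoined.exists_degree_le hH.le
  refine ⟨F, hFdeg, fun U hU => ?_⟩
  have hbad : (#{v | #{u ∈ U | F.Adj v u} < k} : ℝ) < 2 * t := by
    exact_mod_cast hFU U (by exact_mod_cast h3t.trans hU)
  linarith

/-- For any integer `k ≥ 1` and real `ε > 0`, there are constants `d` and `M₀` such that
for all `M ≥ M₀` there is a graph `F` on `M` vertices with maximum degree at most `d` such
that for every `U ⊆ V(F)` with `|U| ≥ ε·M`, at most `ε·M` vertices of `F` have fewer than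
`k` neighbors in `U`. -/
theorem stmt_11 (k : ℕ) (hk : 1 ≤ k) (ε : ℝ) (hε : 0 < ε) :
    ∃ d M₀ : ℕ, ∀ M : ℕ, M₀ ≤ M →
      ∃ F : SimpleGraph (Fin M),
        (∀ v : Fin M, (Finset.univ.filter fun u => F.Adj v u).card ≤ d) ∧
        ∀ U : Finset (Fin M), ε * (M : ℝ) ≤ (U.card : ℝ) →
          (((Finset.univ.filter fun v : Fin M =>
              (U.filter fun u => F.Adj v u).card < k).card : ℝ)) ≤ ε * (M : ℝ) :=
  stmt_11_general k ε hε
end
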